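/- Let φ : M₃ → M₃ be a linear preserver of the Lorentz spectrum. Define C₁ = { [0 0; vᵀ a] : 0 ≠ v ∈ ℝ², a ∈ ℝ, 0 < a + ‖v‖ }, C₂ = { [0 0; vᵀ a] : 0 ≠ v ∈ ℝ², a ∈ ℝ, a + ‖v‖ = 0 }, C₃ = { [0 0; vᵀ a] : 0 ≠ v ∈ ℝ², a ∈ ℝ, a + ‖v‖ < 0 }, C₄ = { [0 0; 0ᵀ a] : a ∈ ℝ, a > 0 }, and C₅ = { [0 0; 0ᵀ a] : a ∈ ℝ, a ≤ 0 }. Then φ(C₁) ⊆ C₁, φ(C₂ ∪ C₄) ⊆ C₂ ∪ C₄, and φ(C₃ ∪ C₅) ⊆ C₃ ∪ C₅. -/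

import Mathlib

open Matrix

noncomputable section

/-- Euclidean norm of a vector in `ℝ^n`. -/
def euclidNorm {n : ℕ} (x : Fin n → ℝ) : ℝ := Real.sqrt (∑ i, x i ^ 2)

/-- The Lorentz cone in `ℝ^(n+1)`: vectors `(ξ, η)` with `‖ξ‖ ≤ η`. -/
def lorentzCone (n : ℕ) : Set (Fin (n + 1) → ℝ) :=
  {x | euclidNorm (fun i : Fin n => x i.castSucc) ≤ x (Fin.last n)}

/-- `x` is a Lorentz eigenvector of `A` associated with the Lorentz eigenvalue `l`. -/
def IsLEigenvector {n : ℕ} (A : Matrix (Fin (n + 1)) (Fin (n + 1)) ℝ) (l : ℝ)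
    (x : Fin (n + 1) → ℝ) : Prop :=
  x ≠ 0 ∧ x ∈ lorentzCone n ∧ (A - l • 1) *ᵥ x ∈ lorentzCone n ∧
    x ⬝ᵥ ((A - l • 1) *ᵥ x) = 0

/-- The Lorentz spectrum of `A`. -/
def sigmaL {n : ℕ} (A : Matrix (Fin (n + 1)) (Fin (n + 1)) ℝ) : Set ℝ :=
  {l | ∃ x, IsLEigenvector A l x}

/-- The interior Lorentz spectrum of `A`. -/
def sigmaInt {n : ℕ} (A : Matrix (Fin (n + 1)) (Fin (n + 1)) ℝ) : Set ℝ :=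
  {l | ∃ x, IsLEigenvector A l x ∧
    euclidNorm (fun i : Fin n => x i.castSucc) < x (Fin.last n)}

/-- The boundary Lorentz spectrum of `A`. -/
def sigmaBd {n : ℕ} (A : Matrix (Fin (n + 1)) (Fin (n + 1)) ℝ) : Set ℝ :=
  {l | ∃ x, IsLEigenvector A l x ∧
    euclidNorm (fun i : Fin n => x i.castSucc) = x (Fin.last n)}

/-- The block matrix `[X u; vᵀ a]` in `M₃`. -/
def blk (X : Matrix (Fin 2) (Fin 2) ℝ) (u v : Fin 2 → ℝ) (a : ℝ) :
    Matrix (Fin 3) (Fin 3) ℝ :=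
  Matrix.of (Fin.snoc (fun i : Fin 2 => Fin.snoc (X i) (u i)) (Fin.snoc v a))

/-- The set $\mathcal{C}_1$. -/
def C1 : Set (Matrix (Fin 3) (Fin 3) ℝ) :=
  {A | ∃ (v : Fin 2 → ℝ) (a : ℝ), v ≠ 0 ∧ 0 < a + euclidNorm v ∧ A = blk 0 0 v a}

/-- The set $\mathcal{C}_2$. -/
def C2 : Set (Matrix (Fin 3) (Fin 3) ℝ) :=
  {A | ∃ (v : Fin 2 → ℝ) (a : ℝ), v ≠ 0 ∧ a + euclidNorm v = 0 ∧ A = blk 0 0 v a}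

/-- The set $\mathcal{C}_3$. -/
def C3 : Set (Matrix (Fin 3) (Fin 3) ℝ) :=
  {A | ∃ (v : Fin 2 → ℝ) (a : ℝ), v ≠ 0 ∧ a + euclidNorm v < 0 ∧ A = blk 0 0 v a}

/-- The set $\mathcal{C}_4$. -/
def C4 : Set (Matrix (Fin 3) (Fin 3) ℝ) :=
  {A | ∃ a : ℝ, 0 < a ∧ A = blk 0 0 0 a}

/-- The set $\mathcal{C}_5$. -/
def C5 : Set (Matrix (Fin 3) (Fin 3) ℝ) :=
  {A | ∃ a : ℝ, a ≤ 0 ∧ A = blk 0 0 0 a}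

open Set

section Basics
variable (X : Matrix (Fin 2) (Fin 2) ℝ) (u v : Fin 2 → ℝ) (a : ℝ)

lemma blk00 : blk X u v a 0 0 = X 0 0 := by simp [blk, Fin.snoc]; try rfl
lemma blk01 : blk X u v a 0 1 = X 0 1 := by simp [blk, Fin.snoc]; try rfl
lemma blk02 : blk X u v a 0 2 = u 0 := by simp [blk, Fin.snoc]; try rfl
lemma blk10 : blk X u v a 1 0 = X 1 0 := by simp [blk, Fin.snoc]; try rfl
lemma blk11 : blk X u v a 1 1 = X 1 1 := by simp [blk, Fin.snoc]; try rfl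
lemma blk12 : blk X u v a 1 2 = u 1 := by simp [blk, Fin.snoc]; try rfl
lemma blk20 : blk X u v a 2 0 = v 0 := by simp [blk, Fin.snoc]; try rfl
lemma blk21 : blk X u v a 2 1 = v 1 := by simp [blk, Fin.snoc]; try rfl
lemma blk22 : blk X u v a 2 2 = a := by simp [blk, Fin.snoc]; try rfl

/-- a matrix whose first two rows vanish is a `blk 0 0 v a`. -/
lemma eq_blk_of_rows (M : Matrix (Fin 3) (Fin 3) ℝ)
    (h0 : ∀ j, M 0 j = 0) (h1 : ∀ j, M 1 j = 0) :
    M = blk 0 0 (fun j => M 2 j.castSucc) (M 2 2) := by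
  ext i j
  fin_cases i <;> fin_cases j <;>
    simp [h0, h1, blk00, blk01, blk02, blk10, blk11, blk12, blk20, blk21, blk22] <;> rfl

lemma blk_injv {v w : Fin 2 → ℝ} {a b : ℝ} (h : blk 0 0 v a = blk 0 0 w b) :
    v = w ∧ a = b := by
  constructor
  · funext j
    fin_cases j
    · have := congrFun (congrFun h 2) 0; rwa [blk20, blk20] at this
    · have := congrFun (congrFun h 2) 1; rwa [blk21, blk21] at this
  · have := congrFun (congrFun h 2) 2; rwa [blk22, blk22] at this

lemma neg_blk : -(blk X u v a) = blk (-X) (-u) (-v) (-a) := by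
  ext i j
  fin_cases i <;> fin_cases j <;>
    simp [blk00, blk01, blk02, blk10, blk11, blk12, blk20, blk21, blk22]

lemma blk_add_smul (v w : Fin 2 → ℝ) (a b t : ℝ) :
    blk 0 0 v a + t • blk 0 0 w b = blk 0 0 (v + t • w) (a + t * b) := by
  ext i j
  fin_cases i <;> fin_cases j <;>
    simp [blk00, blk01, blk02, blk10, blk11, blk12, blk20, blk21, blk22]

lemma blk_zero : blk 0 0 0 0 = 0 := by
  ext i j
  fin_cases i <;> fin_cases j <;>
    simp [blk00, blk01, blk02, blk10, blk11, blk12, blk20, blk21, blk22]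

lemma euclidNorm_nonneg : 0 ≤ euclidNorm v := Real.sqrt_nonneg _

lemma euclidNorm_sq : euclidNorm v ^ 2 = v 0 ^ 2 + v 1 ^ 2 := by
  rw [euclidNorm, Real.sq_sqrt (by positivity), Fin.sum_univ_two]

lemma euclidNorm_eq_sqrt : euclidNorm v = Real.sqrt (v 0 ^ 2 + v 1 ^ 2) := by
  rw [euclidNorm, Fin.sum_univ_two]

lemma euclidNorm_eq_zero {v : Fin 2 → ℝ} : euclidNorm v = 0 ↔ v = 0 := by
  rw [euclidNorm_eq_sqrt]
  constructor
  · intro h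
    have h2 : v 0 ^ 2 + v 1 ^ 2 = 0 := by
      have := Real.sqrt_eq_zero (by positivity) |>.mp h
      linarith [this]
    have h0 : v 0 = 0 := by nlinarith [sq_nonneg (v 0), sq_nonneg (v 1)]
    have h1 : v 1 = 0 := by nlinarith [sq_nonneg (v 0), sq_nonneg (v 1)]
    funext j; fin_cases j <;> simp [h0, h1]
  · intro h; subst h; simp [Real.sqrt_eq_zero']

lemma euclidNorm_neg : euclidNorm (-v) = euclidNorm v := by
  rw [euclidNorm_eq_sqrt, euclidNorm_eq_sqrt]; norm_num

lemma euclidNorm_pos_of_ne {v : Fin 2 → ℝ} (h : v ≠ 0) : 0 < euclidNorm v :=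
  lt_of_le_of_ne (euclidNorm_nonneg v) (fun h' => h (euclidNorm_eq_zero.mp h'.symm))

lemma euclidNorm_smul (t : ℝ) (ht : 0 ≤ t) : euclidNorm (t • v) = t * euclidNorm v := by
  rw [euclidNorm_eq_sqrt, euclidNorm_eq_sqrt]
  simp only [Pi.smul_apply, smul_eq_mul]
  rw [show (t * v 0) ^ 2 + (t * v 1) ^ 2 = t ^ 2 * (v 0 ^ 2 + v 1 ^ 2) by ring,
    Real.sqrt_mul (by positivity), Real.sqrt_sq ht]

/-- Cauchy-Schwarz for `Fin 2` vectors. -/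
lemma abs_dot_le (w : Fin 2 → ℝ) : |v 0 * w 0 + v 1 * w 1| ≤ euclidNorm v * euclidNorm w := by
  rw [euclidNorm_eq_sqrt, euclidNorm_eq_sqrt, ← Real.sqrt_mul (by positivity)]
  rw [show |v 0 * w 0 + v 1 * w 1| = Real.sqrt ((v 0 * w 0 + v 1 * w 1) ^ 2) by
    rw [Real.sqrt_sq_eq_abs]]
  apply Real.sqrt_le_sqrt
  nlinarith [sq_nonneg (v 0 * w 1 - v 1 * w 0)]

lemma euclidNorm_triangle (w : Fin 2 → ℝ) : euclidNorm (v + w) ≤ euclidNorm v + euclidNorm w := by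
  have h := abs_dot_le v w
  have h0 : v 0 * w 0 + v 1 * w 1 ≤ euclidNorm v * euclidNorm w := (abs_le.mp h).2
  have e1 := euclidNorm_sq v; have e2 := euclidNorm_sq w
  have e3 : euclidNorm (v + w) ^ 2 = (v 0 + w 0) ^ 2 + (v 1 + w 1) ^ 2 := by
    rw [euclidNorm_sq]; simp
  have hnn := euclidNorm_nonneg (v + w); have h1 := euclidNorm_nonneg v; have h2 := euclidNorm_nonneg w
  nlinarith [e3, e1, e2]

/-- existence of a unit vector with prescribed dot product -/
lemma exists_unit_dot (d : ℝ) (h : |d| ≤ euclidNorm v) :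
    ∃ ξ : Fin 2 → ℝ, ξ 0 ^ 2 + ξ 1 ^ 2 = 1 ∧ v 0 * ξ 0 + v 1 * ξ 1 = d := by
  by_cases hv : v = 0
  · subst hv
    have hd : d = 0 := by
      rw [euclidNorm_eq_zero.mpr rfl] at h
      exact abs_eq_zero.mp (le_antisymm h (abs_nonneg d))
    subst hd
    exact ⟨![1, 0], by norm_num, by norm_num⟩
  · set q := v 0 ^ 2 + v 1 ^ 2 with hq
    have hqpos : 0 < q := by
      rcases (by simpa [funext_iff, Fin.forall_fin_two] using hv : ¬(v 0 = 0 ∧ v 1 = 0)) with h'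
      by_contra hle
      push_neg at hle
      have h0 : v 0 = 0 := by nlinarith [sq_nonneg (v 0), sq_nonneg (v 1)]
      have h1 : v 1 = 0 := by nlinarith [sq_nonneg (v 0), sq_nonneg (v 1)]
      exact h' ⟨h0, h1⟩
    have hd2 : d ^ 2 ≤ q := by
      have := h
      rw [euclidNorm_eq_sqrt] at this
      nlinarith [abs_nonneg d, Real.sq_sqrt (le_of_lt hqpos), Real.sqrt_nonneg q, sq_abs d]
    set t := Real.sqrt (q - d ^ 2) with htdef
    have ht2 : t ^ 2 = q - d ^ 2 := Real.sq_sqrt (by linarith)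
    refine ⟨![(d * v 0 - t * v 1) / q, (d * v 1 + t * v 0) / q], ?_, ?_⟩
    · have : ((d * v 0 - t * v 1) / q) ^ 2 + ((d * v 1 + t * v 0) / q) ^ 2
          = (d ^ 2 + t ^ 2) * q / q ^ 2 := by field_simp; ring
      rw [show ((![(d * v 0 - t * v 1) / q, (d * v 1 + t * v 0) / q] : Fin 2 → ℝ) 0) = (d * v 0 - t * v 1) / q by norm_num,
        show ((![(d * v 0 - t * v 1) / q, (d * v 1 + t * v 0) / q] : Fin 2 → ℝ) 1) = (d * v 1 + t * v 0) / q by norm_num,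
        this, ht2]
      field_simp
      ring
    · rw [show ((![(d * v 0 - t * v 1) / q, (d * v 1 + t * v 0) / q] : Fin 2 → ℝ) 0) = (d * v 0 - t * v 1) / q by norm_num,
        show ((![(d * v 0 - t * v 1) / q, (d * v 1 + t * v 0) / q] : Fin 2 → ℝ) 1) = (d * v 1 + t * v 0) / q by norm_num]
      field_simp
      ring
end Basics

section Cone

lemma mem_cone (x : Fin 3 → ℝ) :
    x ∈ lorentzCone 2 ↔ Real.sqrt (x 0 ^ 2 + x 1 ^ 2) ≤ x 2 := by
  simp only [lorentzCone, Set.mem_setOf_eq, euclidNorm, Fin.sum_univ_two, Fin.castSucc_zero,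
    Fin.castSucc_one]
  rfl

lemma dot3 (x y : Fin 3 → ℝ) : x ⬝ᵥ y = x 0 * y 0 + x 1 * y 1 + x 2 * y 2 := by
  simp [dotProduct, Fin.sum_univ_three]

lemma mulVec3 (M : Matrix (Fin 3) (Fin 3) ℝ) (x : Fin 3 → ℝ) (l : ℝ) (i : Fin 3) :
    ((M - l • 1) *ᵥ x) i = M i 0 * x 0 + M i 1 * x 1 + M i 2 * x 2 - l * x i := by
  fin_cases i <;>
  · simp [Matrix.mulVec, dotProduct, Fin.sum_univ_three, Matrix.sub_apply, Matrix.smul_apply,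
      Matrix.one_apply]
    try ring

/-- Cauchy-Schwarz, sqrt form. -/
lemma abs_dot_le' (v : Fin 2 → ℝ) (p q : ℝ) :
    |v 0 * p + v 1 * q| ≤ euclidNorm v * Real.sqrt (p ^ 2 + q ^ 2) := by
  have h := abs_dot_le v ![p, q]
  have e : euclidNorm ![p, q] = Real.sqrt (p ^ 2 + q ^ 2) := by
    rw [euclidNorm_eq_sqrt]; norm_num
  simpa [e] using h

end Cone

section Spec

lemma forward_arith (c a l p q r d n : ℝ) (hn : 0 ≤ n)
    (hCS : |d| ≤ n * Real.sqrt (p ^ 2 + q ^ 2))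
    (hxne : ¬(p = 0 ∧ q = 0 ∧ r = 0))
    (hxc : Real.sqrt (p ^ 2 + q ^ 2) ≤ r)
    (hyc : |c - l| * Real.sqrt (p ^ 2 + q ^ 2) ≤ d + (a - l) * r)
    (hdot : (c - l) * (p ^ 2 + q ^ 2) + r * (d + (a - l) * r) = 0) :
    l = a ∨ (c ≤ l ∧ |2 * l - a - c| ≤ n) := by
  set s := Real.sqrt (p ^ 2 + q ^ 2) with hsdef
  have hs0 : 0 ≤ s := Real.sqrt_nonneg _
  have hs2 : s ^ 2 = p ^ 2 + q ^ 2 := Real.sq_sqrt (by positivity)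
  set y2 := d + (a - l) * r with hy2def
  have hy2nn : 0 ≤ y2 := le_trans (by positivity) hyc
  clear_value s y2
  by_cases hw : p ^ 2 + q ^ 2 = 0
  · left
    have hp0 : p = 0 := by nlinarith [sq_nonneg p, sq_nonneg q]
    have hq0 : q = 0 := by nlinarith [sq_nonneg p, sq_nonneg q]
    have hsz : s = 0 := by nlinarith
    have hrpos : 0 < r := by
      rcases lt_or_eq_of_le (hsz ▸ hxc) with h | h
      · exact h
      · exact absurd ⟨hp0, hq0, h.symm⟩ hxne
    have hry2 : r * y2 = 0 := by linear_combination hdot - (c - l) * hw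
    have hy2z : y2 = 0 := by
      rcases mul_eq_zero.mp hry2 with h | h
      · exact absurd h (ne_of_gt hrpos)
      · exact h
    have hdz : d = 0 := by nlinarith [abs_nonneg d, abs_le.mp hCS]
    have : (a - l) * r = 0 := by rw [hy2def, hdz] at hy2z; linarith
    rcases mul_eq_zero.mp this with h | h
    · linarith
    · exact absurd h (ne_of_gt hrpos)
  · right
    have hwpos : 0 < p ^ 2 + q ^ 2 := lt_of_le_of_ne (by positivity) (Ne.symm hw)
    have hspos : 0 < s := by nlinarith
    have hrpos : 0 < r := lt_of_lt_of_le hspos hxc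
    have hcl : c ≤ l := by nlinarith [mul_nonneg (le_of_lt hrpos) hy2nn]
    refine ⟨hcl, ?_⟩
    have habs : |c - l| = l - c := by rw [abs_of_nonpos (by linarith)]; ring
    rw [habs] at hyc
    rcases eq_or_lt_of_le hcl with hceq | hclt
    · subst hceq
      have hry2 : r * y2 = 0 := by linear_combination hdot
      have hy2z : y2 = 0 := by
        rcases mul_eq_zero.mp hry2 with h | h
        · exact absurd h (ne_of_gt hrpos)
        · exact h
      have hd : d = -((a - c) * r) := by rw [hy2def] at hy2z; linarith
      have h5 : |a - c| * r ≤ n * r := by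
        calc |a - c| * r = |d| := by rw [hd, abs_neg, abs_mul, abs_of_pos hrpos]
          _ ≤ n * s := hCS
          _ ≤ n * r := mul_le_mul_of_nonneg_left hxc hn
      have h6 : |a - c| ≤ n := le_of_mul_le_mul_right (by linarith) hrpos
      rw [show 2 * c - a - c = -(a - c) by ring, abs_neg]
      exact h6
    · have h2 : r * y2 = (l - c) * s ^ 2 := by linear_combination hdot - (l - c) * hs2
      have hrs : r = s := by
        have h3 : r * ((l - c) * s) ≤ r * y2 :=
          mul_le_mul_of_nonneg_left hyc (le_of_lt hrpos)
        have h4 : r ≤ s := by nlinarith [mul_pos (sub_pos.mpr hclt) hspos]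
        linarith
      have hy2v : y2 = (l - c) * r := by
        apply mul_left_cancel₀ (ne_of_gt hrpos)
        rw [h2, hrs]; ring
      have hd : d = (2 * l - a - c) * r := by rw [hy2def] at hy2v; linarith
      have hCS' : |2 * l - a - c| * r ≤ n * r := by
        calc |2 * l - a - c| * r = |d| := by rw [hd, abs_mul, abs_of_pos hrpos]
          _ ≤ n * s := hCS
          _ = n * r := by rw [hrs]
      exact le_of_mul_le_mul_right (by linarith) hrpos


lemma blkc_entries (c a : ℝ) (v : Fin 2 → ℝ) :
    blk (c • 1) 0 v a 0 0 = c ∧ blk (c • 1) 0 v a 0 1 = 0 ∧ blk (c • 1) 0 v a 0 2 = 0 ∧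
    blk (c • 1) 0 v a 1 0 = 0 ∧ blk (c • 1) 0 v a 1 1 = c ∧ blk (c • 1) 0 v a 1 2 = 0 ∧
    blk (c • 1) 0 v a 2 0 = v 0 ∧ blk (c • 1) 0 v a 2 1 = v 1 ∧ blk (c • 1) 0 v a 2 2 = a := by
  refine ⟨?_, ?_, ?_, ?_, ?_, ?_, ?_, ?_, ?_⟩ <;>
    simp [blk00, blk01, blk02, blk10, blk11, blk12, blk20, blk21, blk22, Matrix.smul_apply,
      Matrix.one_apply]

theorem sigmaL_blk (c a : ℝ) (v : Fin 2 → ℝ) :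
    sigmaL (blk (c • 1) 0 v a) = {a} ∪ {l | c ≤ l ∧ |2 * l - a - c| ≤ euclidNorm v} := by
  obtain ⟨e00, e01, e02, e10, e11, e12, e20, e21, e22⟩ := blkc_entries c a v
  set B := blk (c • (1 : Matrix (Fin 2) (Fin 2) ℝ)) 0 v a with hBdef
  have hy0 : ∀ (l : ℝ) (x : Fin 3 → ℝ), ((B - l • 1) *ᵥ x) 0 = (c - l) * x 0 := by
    intro l x; rw [mulVec3, e00, e01, e02]; ring
  have hy1 : ∀ (l : ℝ) (x : Fin 3 → ℝ), ((B - l • 1) *ᵥ x) 1 = (c - l) * x 1 := by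
    intro l x; rw [mulVec3, e10, e11, e12]; ring
  have hy2 : ∀ (l : ℝ) (x : Fin 3 → ℝ),
      ((B - l • 1) *ᵥ x) 2 = v 0 * x 0 + v 1 * x 1 + (a - l) * x 2 := by
    intro l x; rw [mulVec3, e20, e21, e22]; ring
  ext l
  simp only [Set.mem_union, Set.mem_singleton_iff, Set.mem_setOf_eq]
  constructor
  · rintro ⟨x, hx0, hxc, hyc, hdot⟩
    rw [mem_cone] at hxc
    rw [mem_cone, hy0, hy1, hy2] at hyc
    rw [dot3, hy0, hy1, hy2] at hdot
    have hxne : ¬(x 0 = 0 ∧ x 1 = 0 ∧ x 2 = 0) := by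
      rintro ⟨h0, h1, h2⟩
      apply hx0
      funext i; fin_cases i <;> simp [h0, h1, h2]
    have hsq : Real.sqrt (((c - l) * x 0) ^ 2 + ((c - l) * x 1) ^ 2)
        = |c - l| * Real.sqrt (x 0 ^ 2 + x 1 ^ 2) := by
      rw [show ((c - l) * x 0) ^ 2 + ((c - l) * x 1) ^ 2
          = (c - l) ^ 2 * (x 0 ^ 2 + x 1 ^ 2) by ring,
        Real.sqrt_mul (sq_nonneg _), Real.sqrt_sq_eq_abs]
    rw [hsq] at hyc
    exact forward_arith c a l (x 0) (x 1) (x 2) (v 0 * x 0 + v 1 * x 1) (euclidNorm v)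
      (euclidNorm_nonneg v) (abs_dot_le' v (x 0) (x 1)) hxne hxc
      (by linarith [hyc]) (by linear_combination hdot)
  · intro hl
    rcases hl with hla | ⟨hcl, habs⟩
    · -- l = a, eigenvector e3
      subst hla
      refine ⟨![0, 0, 1], ?_, ?_, ?_, ?_⟩
      · intro h
        have := congrFun h 2
        norm_num [Matrix.cons_val_two, Matrix.tail_cons, Matrix.head_cons] at this
      · rw [mem_cone]; norm_num [Matrix.cons_val_two, Matrix.tail_cons, Matrix.head_cons]
      · rw [mem_cone, hy0, hy1, hy2]; norm_num
      · rw [dot3, hy0, hy1, hy2]; norm_num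
    · obtain ⟨ξ, hunit, hdotv⟩ := exists_unit_dot v (2 * l - a - c) habs
      refine ⟨![ξ 0, ξ 1, 1], ?_, ?_, ?_, ?_⟩
      · intro h
        have := congrFun h 2
        norm_num [Matrix.cons_val_two, Matrix.tail_cons, Matrix.head_cons] at this
      · rw [mem_cone]
        norm_num [hunit, Matrix.cons_val_two, Matrix.tail_cons, Matrix.head_cons]
      · rw [mem_cone, hy0, hy1, hy2]
        norm_num [Matrix.cons_val_two, Matrix.tail_cons, Matrix.head_cons]
        rw [show ((c - l) * ξ 0) ^ 2 + ((c - l) * ξ 1) ^ 2 = (c - l) ^ 2 * (ξ 0 ^ 2 + ξ 1 ^ 2) by ring,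
          hunit, mul_one, Real.sqrt_sq_eq_abs, abs_of_nonpos (by linarith : c - l ≤ 0)]
        rw [hdotv]  -- ?
        linarith
      · rw [dot3, hy0, hy1, hy2]
        norm_num [Matrix.cons_val_two, Matrix.tail_cons, Matrix.head_cons]
        nlinarith [hunit, hdotv]

end Spec


open Set in
lemma T_eq_Icc (c b m : ℝ) :
    {l : ℝ | c ≤ l ∧ |2 * l - b - c| ≤ m} = Icc (max c ((b + c - m) / 2)) ((b + c + m) / 2) := by
  ext l
  simp only [mem_setOf_eq, mem_Icc, max_le_iff, abs_le]
  constructor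
  · rintro ⟨h1, h2, h3⟩; exact ⟨⟨h1, by linarith⟩, by linarith⟩
  · rintro ⟨⟨h1, h2⟩, h3⟩; exact ⟨h1, by linarith, by linarith⟩

open Set in
lemma aux_Icc {L R b L' R' : ℝ} (h : L < R)
    (hsub : Icc L R ⊆ {b} ∪ Icc L' R') : Icc L R ⊆ Icc L' R' := by
  intro x hx
  by_cases hxb : x = b
  · subst hxb
    rw [mem_Icc] at hx
    obtain ⟨hL, hR⟩ := hx
    constructor
    · by_contra hlt
      push_neg at hlt
      rcases lt_or_eq_of_le hR with hxR | hxR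
      · set y := min R (x + (L' - x) / 2) with hy
        have hyIcc : y ∈ Icc L R := ⟨le_min (by linarith) (by linarith), min_le_left _ _⟩
        have hyne : y ≠ x := ne_of_gt (lt_min hxR (by linarith))
        have hyL' : y < L' := lt_of_le_of_lt (min_le_right _ _) (by linarith)
        rcases hsub hyIcc with h' | h'
        · exact hyne h'
        · exact absurd h'.1 (not_le.mpr hyL')
      · set y := x - (x - L) / 2 with hy
        have hLx : L < x := by rw [hxR]; exact h
        have hyIcc : y ∈ Icc L R := ⟨by rw [hy]; linarith, by rw [hy]; linarith⟩
        have hyne : y ≠ x := by rw [hy]; intro hcon; nlinarith [hcon]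
        have hyL' : y < L' := by rw [hy]; linarith
        rcases hsub hyIcc with h' | h'
        · exact hyne h'
        · exact absurd h'.1 (not_le.mpr hyL')
    · by_contra hlt
      push_neg at hlt
      rcases lt_or_eq_of_le hL with hLx | hLx
      · have h1 : max L R' < x := max_lt hLx hlt
        set y := max L ((max L R' + x) / 2) with hy
        have hyIcc : y ∈ Icc L R := by
          refine ⟨le_max_left _ _, max_le (le_of_lt h) ?_⟩
          linarith
        have hyne : y ≠ x := ne_of_lt (max_lt hLx (by linarith))
        have hyR' : R' < y := by
          have h2 : R' ≤ max L R' := le_max_right _ _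
          have h3 : R' < (max L R' + x) / 2 := by linarith
          exact lt_of_lt_of_le h3 (le_max_right _ _)
        rcases hsub hyIcc with h' | h'
        · exact hyne h'
        · exact absurd h'.2 (not_le.mpr hyR')
      · set y := x + (R - x) / 2 with hy
        have hxR : x < R := by rw [← hLx]; exact h
        have hyIcc : y ∈ Icc L R := ⟨by rw [hy]; linarith, by rw [hy]; linarith⟩
        have hyne : y ≠ x := by rw [hy]; intro hcon; nlinarith [hcon]
        have hyR' : R' < y := by rw [hy]; linarith
        rcases hsub hyIcc with h' | h'
        · exact hyne h'
        · exact absurd h'.2 (not_le.mpr hyR')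
  · rcases hsub hx with h' | h'
    · exact absurd h' hxb
    · exact h'

open Set in
lemma interval_match {b L1 R1 a L0 R0 : ℝ} (h0 : L0 < R0)
    (h : {b} ∪ Icc L1 R1 = {a} ∪ Icc L0 R0) :
    L1 = L0 ∧ R1 = R0 := by
  have h1 : Icc L0 R0 ⊆ {b} ∪ Icc L1 R1 := by
    rw [h]; exact subset_union_right
  have h2 : Icc L0 R0 ⊆ Icc L1 R1 := aux_Icc h0 h1
  have hL0 : L0 ∈ Icc L1 R1 := h2 (left_mem_Icc.mpr (le_of_lt h0))
  have hR0 : R0 ∈ Icc L1 R1 := h2 (right_mem_Icc.mpr (le_of_lt h0))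
  have h3 : L1 < R1 := lt_of_le_of_lt hL0.1 (lt_of_lt_of_le h0 hR0.2)
  have h4 : Icc L1 R1 ⊆ {a} ∪ Icc L0 R0 := by
    rw [← h]; exact subset_union_right
  have h5 : Icc L1 R1 ⊆ Icc L0 R0 := aux_Icc h3 h4
  have hL1 : L1 ∈ Icc L0 R0 := h5 (left_mem_Icc.mpr (le_of_lt h3))
  have hR1 : R1 ∈ Icc L0 R0 := h5 (right_mem_Icc.mpr (le_of_lt h3))
  exact ⟨le_antisymm hL0.1 hL1.1, le_antisymm hR1.2 hR0.2⟩

open Set in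
lemma matching {a n b c m : ℝ} (hn : 0 < n) (han : 0 < a + n) (hm : 0 < m)
    (h1 : ({b} : Set ℝ) ∪ Icc (max c ((b + c - m) / 2)) ((b + c + m) / 2)
        = {a} ∪ Icc (max 0 ((a - n) / 2)) ((a + n) / 2))
    (h2 : ({-b} : Set ℝ) ∪ Icc (max (-c) ((-b - c - m) / 2)) ((-b - c + m) / 2)
        = {-a} ∪ Icc (max 0 ((-a - n) / 2)) ((-a + n) / 2)) :
    c = 0 := by
  have hL0R0 : max 0 ((a - n) / 2) < (a + n) / 2 := by
    apply max_lt <;> linarith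
  obtain ⟨hL, hR⟩ := interval_match hL0R0 h1
  have hRR : b + c + m = a + n := by linarith [hR]
  rcases lt_trichotomy c 0 with hc | hc | hc
  · -- c < 0
    exfalso
    rcases lt_trichotomy n a with hna | hna | hna
    · -- n < a : RHS of h2 = {-a}
      have hIcc2 : Icc (max 0 ((-a - n) / 2)) ((-a + n) / 2) = ∅ := by
        apply Icc_eq_empty
        intro hcon
        have h' : (0:ℝ) ≤ max 0 ((-a - n) / 2) := le_max_left _ _
        linarith [le_trans h' hcon]
      rw [hIcc2, union_empty] at h2
      have hba : -b ∈ ({-a} : Set ℝ) := by rw [← h2]; exact mem_union_left _ rfl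
      have hba' : b = a := by simp at hba; linarith
      have hmn : m = n - c := by linarith
      have hLpos : max (0:ℝ) ((a - n) / 2) = (a - n) / 2 :=
        max_eq_right (by linarith)
      rw [hLpos] at hL
      have hmax : max c ((b + c - m) / 2) < (a - n) / 2 := by
        apply max_lt
        · linarith
        · linarith
      rw [hL] at hmax
      linarith
    · -- n = a
      have hL0 : max (0:ℝ) ((a - n) / 2) = 0 := max_eq_left (by linarith)
      rw [hL0] at hL
      have hbc : (b + c - m) / 2 = 0 := by
        rcases max_choice c ((b + c - m) / 2) with h' | h'
        · rw [h'] at hL; linarith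
        · rw [h'] at hL; exact hL
      have hma : m = a := by linarith
      have hba : b = a - c := by linarith
      have hIcc2 : Icc (max 0 ((-a - n) / 2)) ((-a + n) / 2) = Icc 0 0 := by
        rw [max_eq_left (by linarith : (-a - n) / 2 ≤ 0), show (-a + n) / 2 = 0 by linarith]
      rw [hIcc2, Icc_self] at h2
      have hmb : -b ∈ ({-a} : Set ℝ) ∪ {0} := by rw [← h2]; exact mem_union_left _ rfl
      rcases hmb with h' | h'
      · simp at h'; have : b = a := by linarith
        rw [hba] at this; linarith
      · simp at h'
        rw [hba] at h'; linarith
    · -- n > a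
      have hR3pos : (0:ℝ) < (-a + n) / 2 := by linarith
      have hL3 : max (0:ℝ) ((-a - n) / 2) = 0 := max_eq_left (by linarith)
      rw [hL3] at h2
      have hsub : Icc (0:ℝ) ((-a + n) / 2)
          ⊆ {-b} ∪ Icc (max (-c) ((-b - c - m) / 2)) ((-b - c + m) / 2) := by
        rw [h2]; exact subset_union_right
      have h5 := aux_Icc hR3pos hsub
      have h6 : (0:ℝ) ∈ Icc (max (-c) ((-b - c - m) / 2)) ((-b - c + m) / 2) :=
        h5 (left_mem_Icc.mpr (le_of_lt hR3pos))
      have h7 : -c ≤ 0 := le_trans (le_max_left _ _) h6.1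
      linarith
  · exact hc
  · -- c > 0
    exfalso
    have han' : n < a := by
      by_contra hna
      push_neg at hna
      have hL0 : max (0:ℝ) ((a - n) / 2) = 0 := max_eq_left (by linarith)
      have h' : c ≤ max c ((b + c - m) / 2) := le_max_left _ _
      rw [hL, hL0] at h'
      linarith
    have hIcc2 : Icc (max 0 ((-a - n) / 2)) ((-a + n) / 2) = ∅ := by
      apply Icc_eq_empty
      intro hcon
      have h' : (0:ℝ) ≤ max 0 ((-a - n) / 2) := le_max_left _ _
      linarith [le_trans h' hcon]
    rw [hIcc2, union_empty] at h2
    have hba : -b ∈ ({-a} : Set ℝ) := by rw [← h2]; exact mem_union_left _ rfl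
    have hba' : b = a := by simp at hba; linarith
    have hmn : m = n - c := by linarith
    have hLpos : max (0:ℝ) ((a - n) / 2) = (a - n) / 2 := max_eq_right (by linarith)
    rw [hLpos] at hL
    have h' : (b + c - m) / 2 ≤ max c ((b + c - m) / 2) := le_max_right _ _
    rw [hL] at h'
    linarith


lemma CS2 (p q y0 y1 : ℝ) : |p * y0 + q * y1| ≤ Real.sqrt (p^2 + q^2) * Real.sqrt (y0^2 + y1^2) := by
  rw [← Real.sqrt_mul (by positivity)]
  rw [show |p * y0 + q * y1| = Real.sqrt ((p * y0 + q * y1) ^ 2) by rw [Real.sqrt_sq_eq_abs]]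
  apply Real.sqrt_le_sqrt
  nlinarith [sq_nonneg (p * y1 - q * y0)]

/-- interior case: the moved vector vanishes -/
lemma interior_arith (p q r y0 y1 y2 : ℝ)
    (hxc : Real.sqrt (p^2 + q^2) < r)
    (hyc : Real.sqrt (y0^2 + y1^2) ≤ y2)
    (hdot : p * y0 + q * y1 + r * y2 = 0) :
    y0 = 0 ∧ y1 = 0 ∧ y2 = 0 := by
  have hs0 : (0:ℝ) ≤ Real.sqrt (p^2+q^2) := Real.sqrt_nonneg _
  have hy2nn : 0 ≤ y2 := le_trans (Real.sqrt_nonneg _) hyc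
  have hCS := CS2 p q y0 y1
  have h1 : r * y2 ≤ Real.sqrt (p^2+q^2) * Real.sqrt (y0^2+y1^2) := by
    have := abs_le.mp hCS
    linarith [this.1]
  have h2 : Real.sqrt (p^2+q^2) * Real.sqrt (y0^2+y1^2) ≤ Real.sqrt (p^2+q^2) * y2 :=
    mul_le_mul_of_nonneg_left hyc hs0
  have hy2z : y2 = 0 := by nlinarith
  have hsy : Real.sqrt (y0^2+y1^2) = 0 := le_antisymm (hy2z ▸ hyc) (Real.sqrt_nonneg _)
  have hyy : y0^2 + y1^2 = 0 := by
    have := Real.sq_sqrt (by positivity : (0:ℝ) ≤ y0^2+y1^2)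
    rw [hsy] at this; linarith [this]
  exact ⟨by nlinarith [sq_nonneg y0, sq_nonneg y1], by nlinarith [sq_nonneg y0, sq_nonneg y1], hy2z⟩

/-- boundary case: alignment -/
lemma boundary_arith (p q r y0 y1 y2 : ℝ)
    (hxne : ¬(p = 0 ∧ q = 0 ∧ r = 0))
    (hxc : Real.sqrt (p^2 + q^2) = r)
    (hyc : Real.sqrt (y0^2 + y1^2) ≤ y2)
    (hdot : p * y0 + q * y1 + r * y2 = 0) :
    0 < r ∧ r * y0 = -(y2 * p) ∧ r * y1 = -(y2 * q) := by
  have hr0 : 0 ≤ r := hxc ▸ Real.sqrt_nonneg _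
  have hw : p^2 + q^2 = r^2 := by
    have := Real.sq_sqrt (by positivity : (0:ℝ) ≤ p^2+q^2)
    rw [hxc] at this; linarith
  have hrpos : 0 < r := by
    rcases lt_or_eq_of_le hr0 with h | h
    · exact h
    · exfalso
      apply hxne
      refine ⟨by nlinarith [sq_nonneg p, sq_nonneg q], by nlinarith [sq_nonneg p, sq_nonneg q], h.symm⟩
  have hy2nn : 0 ≤ y2 := le_trans (Real.sqrt_nonneg _) hyc
  have hyy : y0^2 + y1^2 ≤ y2^2 := by
    have := Real.sq_sqrt (by positivity : (0:ℝ) ≤ y0^2+y1^2)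
    nlinarith [Real.sqrt_nonneg (y0^2+y1^2)]
  have hNeq : (r*y0 + y2*p)^2 + (r*y1 + y2*q)^2 = r^2*(y0^2+y1^2-y2^2) := by
    linear_combination (2*r*y2)*hdot + y2^2*hw
  have hN : (r*y0 + y2*p)^2 + (r*y1 + y2*q)^2 ≤ 0 := by
    rw [hNeq]; nlinarith [sq_nonneg r, hyy]
  constructor
  · exact hrpos
  constructor
  · nlinarith [sq_nonneg (r*y0 + y2*p), sq_nonneg (r*y1 + y2*q)]
  · nlinarith [sq_nonneg (r*y0 + y2*p), sq_nonneg (r*y1 + y2*q)]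

lemma key_poly (e00 e01 e02 e10 e11 e12 s t : ℝ) (ht : s^2 + t^2 = 1) (hs : 1 + s ≠ 0)
    (hg : e00*s*t + e01*t^2 + e02*t - e10*s^2 - e11*s*t - e12*s = 0) :
    (-e10 - e12) + (2*(e00-e11) + 2*e02) * (t/(1+s)) + (2*e10 + 4*e01) * (t/(1+s))^2
    + (-2*(e00-e11) + 2*e02) * (t/(1+s))^3 + (-e10 + e12) * (t/(1+s))^4 = 0 := by
  have h4 : (1+s)^4 ≠ 0 := pow_ne_zero _ hs
  apply mul_left_cancel₀ h4
  rw [mul_zero]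
  have hexp : (1+s)^4 * ((-e10 - e12) + (2*(e00-e11) + 2*e02) * (t/(1+s)) + (2*e10 + 4*e01) * (t/(1+s))^2
      + (-2*(e00-e11) + 2*e02) * (t/(1+s))^3 + (-e10 + e12) * (t/(1+s))^4)
      = (-e10 - e12)*(1+s)^4 + (2*(e00-e11) + 2*e02)*t*(1+s)^3 + (2*e10 + 4*e01)*t^2*(1+s)^2
      + (-2*(e00-e11) + 2*e02)*t^3*(1+s) + (-e10 + e12)*t^4 := by
    field_simp
  rw [hexp]
  linear_combination (4*(1+s)^2) * hg +
    (e12 + e10 + 2*t*(e11+e02-e00) - t^2*(e10-e12) + 4*s*e10 + 2*s*t*(e11+e02-e00) + s^2*(3*e10 - e12)) * ht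


section Structure
open Polynomial

lemma det_cubic (B : Matrix (Fin 3) (Fin 3) ℝ) : ∃ P : Polynomial ℝ, P ≠ 0 ∧
    ∀ l : ℝ, (B - l • 1).det = P.eval l := by
  refine ⟨Polynomial.C (B 0 0 * B 1 1 * B 2 2 - B 0 0 * B 1 2 * B 2 1 - B 0 1 * B 1 0 * B 2 2
      + B 0 1 * B 1 2 * B 2 0 + B 0 2 * B 1 0 * B 2 1 - B 0 2 * B 1 1 * B 2 0)
    + Polynomial.C (-(B 0 0 * B 1 1 + B 0 0 * B 2 2 + B 1 1 * B 2 2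
      - B 0 1 * B 1 0 - B 0 2 * B 2 0 - B 1 2 * B 2 1)) * Polynomial.X
    + Polynomial.C (B 0 0 + B 1 1 + B 2 2) * Polynomial.X ^ 2
    - Polynomial.X ^ 3, ?_, ?_⟩
  · intro hP
    have h3 := congrArg (fun p => Polynomial.coeff p 3) hP
    simp only [Polynomial.coeff_add, Polynomial.coeff_sub, Polynomial.coeff_C_mul,
      Polynomial.coeff_X_pow, Polynomial.coeff_C, Polynomial.coeff_X,
      Polynomial.coeff_zero] at h3
    norm_num at h3
  · intro l
    rw [Matrix.det_fin_three]
    simp [Matrix.sub_apply, Matrix.smul_apply, Matrix.one_apply]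
    ring

lemma structure_of_infinite (B : Matrix (Fin 3) (Fin 3) ℝ)
    (hinf : (sigmaL B).Infinite) :
    B 0 1 = 0 ∧ B 1 0 = 0 ∧ B 0 2 = 0 ∧ B 1 2 = 0 ∧ B 0 0 = B 1 1 := by
  obtain ⟨P3, hP3ne, hP3⟩ := det_cubic B
  set Z : Set (ℝ × ℝ) := {st | st.1 ^ 2 + st.2 ^ 2 = 1 ∧
    B 0 0 * st.1 * st.2 + B 0 1 * st.2 ^ 2 + B 0 2 * st.2
      - B 1 0 * st.1 ^ 2 - B 1 1 * st.1 * st.2 - B 1 2 * st.1 = 0} with hZdef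
  have hsub : sigmaL B ⊆ {l | P3.IsRoot l} ∪ (fun st : ℝ × ℝ =>
      (B 0 0 * st.1 ^ 2 + (B 0 1 + B 1 0) * st.1 * st.2 + B 1 1 * st.2 ^ 2
        + (B 0 2 + B 2 0) * st.1 + (B 1 2 + B 2 1) * st.2 + B 2 2) / 2) '' Z := by
    rintro l ⟨x, hx0, hxc, hyc, hdot⟩
    rw [mem_cone] at hxc hyc
    rw [dot3] at hdot
    rw [mulVec3 B x l 0, mulVec3 B x l 1, mulVec3 B x l 2] at hyc
    rw [mulVec3 B x l 0, mulVec3 B x l 1, mulVec3 B x l 2] at hdot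
    have hxne : ¬(x 0 = 0 ∧ x 1 = 0 ∧ x 2 = 0) := by
      rintro ⟨h0, h1, h2⟩
      apply hx0
      funext i; fin_cases i <;> simp [h0, h1, h2]
    rcases lt_or_eq_of_le hxc with hlt | heq
    · left
      obtain ⟨h0, h1, h2⟩ := interior_arith (x 0) (x 1) (x 2)
        (B 0 0 * x 0 + B 0 1 * x 1 + B 0 2 * x 2 - l * x 0)
        (B 1 0 * x 0 + B 1 1 * x 1 + B 1 2 * x 2 - l * x 1)
        (B 2 0 * x 0 + B 2 1 * x 1 + B 2 2 * x 2 - l * x 2)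
        hlt hyc (by linarith [hdot])
      have hmv : (B - l • 1) *ᵥ x = 0 := by
        funext i; fin_cases i <;> simp [mulVec3] <;> linarith [h0, h1, h2]
      have hdet : (B - l • 1).det = 0 := Matrix.exists_mulVec_eq_zero_iff.mp ⟨x, hx0, hmv⟩
      rw [hP3 l] at hdet
      exact hdet
    · right
      obtain ⟨hrpos, ha1, ha2⟩ := boundary_arith (x 0) (x 1) (x 2)
        (B 0 0 * x 0 + B 0 1 * x 1 + B 0 2 * x 2 - l * x 0)
        (B 1 0 * x 0 + B 1 1 * x 1 + B 1 2 * x 2 - l * x 1)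
        (B 2 0 * x 0 + B 2 1 * x 1 + B 2 2 * x 2 - l * x 2)
        hxne heq hyc (by linarith [hdot])
      have hrne : x 2 ≠ 0 := ne_of_gt hrpos
      have hw : x 0 ^ 2 + x 1 ^ 2 = x 2 ^ 2 := by
        have := Real.sq_sqrt (by positivity : (0:ℝ) ≤ x 0 ^ 2 + x 1 ^ 2)
        rw [heq] at this; linarith
      have hqy : x 1 * (B 0 0 * x 0 + B 0 1 * x 1 + B 0 2 * x 2 - l * x 0)
          = x 0 * (B 1 0 * x 0 + B 1 1 * x 1 + B 1 2 * x 2 - l * x 1) := by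
        have hz : x 2 * (x 1 * (B 0 0 * x 0 + B 0 1 * x 1 + B 0 2 * x 2 - l * x 0)
            - x 0 * (B 1 0 * x 0 + B 1 1 * x 1 + B 1 2 * x 2 - l * x 1)) = 0 := by
          linear_combination x 1 * ha1 - x 0 * ha2
        rcases mul_eq_zero.mp hz with h | h
        · exact absurd h hrne
        · linarith
      have hr2 : (x 2 : ℝ) ^ 2 ≠ 0 := pow_ne_zero 2 hrne
      refine ⟨(x 0 / x 2, x 1 / x 2), ⟨?_, ?_⟩, ?_⟩
      · show (x 0 / x 2) ^ 2 + (x 1 / x 2) ^ 2 = 1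
        apply mul_left_cancel₀ hr2
        have hexp : x 2 ^ 2 * ((x 0 / x 2) ^ 2 + (x 1 / x 2) ^ 2) = x 0 ^ 2 + x 1 ^ 2 := by
          field_simp
        rw [hexp]
        linear_combination hw
      · show B 0 0 * (x 0 / x 2) * (x 1 / x 2) + B 0 1 * (x 1 / x 2) ^ 2 + B 0 2 * (x 1 / x 2)
          - B 1 0 * (x 0 / x 2) ^ 2 - B 1 1 * (x 0 / x 2) * (x 1 / x 2) - B 1 2 * (x 0 / x 2) = 0
        apply mul_left_cancel₀ hr2
        rw [mul_zero]
        have hexp : x 2 ^ 2 * (B 0 0 * (x 0 / x 2) * (x 1 / x 2) + B 0 1 * (x 1 / x 2) ^ 2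
            + B 0 2 * (x 1 / x 2) - B 1 0 * (x 0 / x 2) ^ 2 - B 1 1 * (x 0 / x 2) * (x 1 / x 2)
            - B 1 2 * (x 0 / x 2))
            = B 0 0 * x 0 * x 1 + B 0 1 * x 1 ^ 2 + B 0 2 * x 1 * x 2
            - B 1 0 * x 0 ^ 2 - B 1 1 * x 0 * x 1 - B 1 2 * x 0 * x 2 := by
          field_simp
        rw [hexp]
        linear_combination hqy
      · show (B 0 0 * (x 0 / x 2) ^ 2 + (B 0 1 + B 1 0) * (x 0 / x 2) * (x 1 / x 2)
          + B 1 1 * (x 1 / x 2) ^ 2 + (B 0 2 + B 2 0) * (x 0 / x 2) + (B 1 2 + B 2 1) * (x 1 / x 2)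
          + B 2 2) / 2 = l
        apply mul_left_cancel₀ hr2
        have hexp : x 2 ^ 2 * ((B 0 0 * (x 0 / x 2) ^ 2 + (B 0 1 + B 1 0) * (x 0 / x 2) * (x 1 / x 2)
            + B 1 1 * (x 1 / x 2) ^ 2 + (B 0 2 + B 2 0) * (x 0 / x 2) + (B 1 2 + B 2 1) * (x 1 / x 2)
            + B 2 2) / 2)
            = (B 0 0 * x 0 ^ 2 + (B 0 1 + B 1 0) * x 0 * x 1 + B 1 1 * x 1 ^ 2
            + (B 0 2 + B 2 0) * x 0 * x 2 + (B 1 2 + B 2 1) * x 1 * x 2 + B 2 2 * x 2 ^ 2) / 2 := by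
          field_simp
        rw [hexp]
        linear_combination (hdot + l * hw) / 2
  have hZinf : Z.Infinite := by
    by_contra hfin
    rw [Set.not_infinite] at hfin
    exact hinf (Set.Finite.subset ((Polynomial.finite_setOf_isRoot hP3ne).union
      (hfin.image _)) hsub)
  have hZ' : (Z \ {((-1 : ℝ), (0 : ℝ))}).Infinite := hZinf.diff (Set.finite_singleton _)
  have hs1 : ∀ st ∈ Z \ {((-1 : ℝ), (0 : ℝ))}, 1 + st.1 ≠ 0 := by
    rintro ⟨s, t⟩ ⟨⟨hc, hg⟩, hne⟩ h0
    have hc' : s ^ 2 + t ^ 2 = 1 := hc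
    have h0' : 1 + s = 0 := h0
    have hseq : s = -1 := by linarith
    have hteq : t = 0 := by nlinarith
    exact hne (by simp [hseq, hteq])
  have hrecover : ∀ st ∈ Z \ {((-1 : ℝ), (0 : ℝ))},
      (1 + (st.2 / (1 + st.1)) ^ 2) * (1 + st.1) = 2 := by
    rintro ⟨s, t⟩ hst
    have h0 : 1 + s ≠ 0 := hs1 _ hst
    obtain ⟨⟨hc, hg⟩, _⟩ := hst
    have hc' : s ^ 2 + t ^ 2 = 1 := hc
    show (1 + (t / (1 + s)) ^ 2) * (1 + s) = 2
    field_simp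
    linear_combination hc'
  have hinj : Set.InjOn (fun st : ℝ × ℝ => st.2 / (1 + st.1)) (Z \ {((-1 : ℝ), (0 : ℝ))}) := by
    rintro st h1 st' h2 heq
    simp only at heq
    have r1 := hrecover _ h1
    have r2 := hrecover _ h2
    rw [heq] at r1
    have hpos : (0:ℝ) < 1 + (st'.2 / (1 + st'.1)) ^ 2 := by positivity
    have hss : 1 + st.1 = 1 + st'.1 := mul_left_cancel₀ (ne_of_gt hpos) (r1.trans r2.symm)
    have hseq : st.1 = st'.1 := by linarith
    have hteq : st.2 = st'.2 := by
      calc st.2 = st.2 / (1 + st.1) * (1 + st.1) := (div_mul_cancel₀ _ (hs1 _ h1)).symm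
        _ = st'.2 / (1 + st'.1) * (1 + st'.1) := by rw [heq, hss]
        _ = st'.2 := div_mul_cancel₀ _ (hs1 _ h2)
    exact Prod.ext hseq hteq
  set P : Polynomial ℝ := Polynomial.C (-B 1 0 - B 1 2)
    + Polynomial.C (2 * (B 0 0 - B 1 1) + 2 * B 0 2) * Polynomial.X
    + Polynomial.C (2 * B 1 0 + 4 * B 0 1) * Polynomial.X ^ 2
    + Polynomial.C (-2 * (B 0 0 - B 1 1) + 2 * B 0 2) * Polynomial.X ^ 3
    + Polynomial.C (-B 1 0 + B 1 2) * Polynomial.X ^ 4 with hPdef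
  have hProots : (fun st : ℝ × ℝ => st.2 / (1 + st.1)) '' (Z \ {((-1 : ℝ), (0 : ℝ))})
      ⊆ {x | P.IsRoot x} := by
    rintro τ ⟨⟨s, t⟩, hst, rfl⟩
    have h0 : 1 + s ≠ 0 := hs1 _ hst
    obtain ⟨⟨hc0, hg0⟩, _⟩ := hst
    have hc : s ^ 2 + t ^ 2 = 1 := hc0
    have hg : B 0 0 * s * t + B 0 1 * t ^ 2 + B 0 2 * t
        - B 1 0 * s ^ 2 - B 1 1 * s * t - B 1 2 * s = 0 := hg0
    have hk := key_poly (B 0 0) (B 0 1) (B 0 2) (B 1 0) (B 1 1) (B 1 2) s t hc h0 hg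
    show Polynomial.eval (t / (1 + s)) P = 0
    rw [hPdef]
    simp only [Polynomial.eval_add, Polynomial.eval_mul, Polynomial.eval_pow,
      Polynomial.eval_C, Polynomial.eval_X]
    linear_combination hk
  have hPinf : {x | P.IsRoot x}.Infinite :=
    (((Set.infinite_image_iff hinj).mpr hZ').mono hProots)
  have hP0 : P = 0 := Polynomial.eq_zero_of_infinite_isRoot P hPinf
  have hcoeff : ∀ k : ℕ, P.coeff k = 0 := by
    intro k; rw [hP0]; simp
  have c0 := hcoeff 0
  have c1 := hcoeff 1
  have c2 := hcoeff 2
  have c3 := hcoeff 3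
  have c4 := hcoeff 4
  rw [hPdef] at c0 c1 c2 c3 c4
  simp only [Polynomial.coeff_add, Polynomial.coeff_C_mul, Polynomial.coeff_X_pow,
    Polynomial.coeff_C, Polynomial.coeff_X, Polynomial.mul_coeff_zero] at c0 c1 c2 c3 c4
  norm_num at c0 c1 c2 c3 c4
  refine ⟨by linarith, by linarith, by linarith, by linarith, by linarith⟩

end Structure

section Assemble
open Set

lemma blk_c0 (v : Fin 2 → ℝ) (a : ℝ) : blk ((0:ℝ) • 1) 0 v a = blk 0 0 v a := by
  rw [zero_smul]

lemma sigmaL0 (v : Fin 2 → ℝ) (a : ℝ) :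
    sigmaL (blk 0 0 v a) = {a} ∪ {l | 0 ≤ l ∧ |2 * l - a - 0| ≤ euclidNorm v} := by
  rw [← blk_c0, sigmaL_blk]

lemma mem_S_self (v : Fin 2 → ℝ) (a : ℝ) : a ∈ sigmaL (blk 0 0 v a) := by
  rw [sigmaL0]; exact mem_union_left _ rfl

lemma mem_S_half (v : Fin 2 → ℝ) (a : ℝ) (h : 0 ≤ a + euclidNorm v) :
    (a + euclidNorm v) / 2 ∈ sigmaL (blk 0 0 v a) := by
  rw [sigmaL0]
  refine mem_union_right _ ⟨by linarith, ?_⟩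
  rw [abs_le]
  constructor <;> linarith [euclidNorm_nonneg v]

lemma S_subset_nonneg (v : Fin 2 → ℝ) (a : ℝ) :
    sigmaL (blk 0 0 v a) ⊆ {a} ∪ {l | 0 ≤ l} := by
  rw [sigmaL0]
  apply union_subset_union_right
  intro l hl
  exact hl.1

lemma S_subset_pair (v : Fin 2 → ℝ) (a : ℝ) (h : a + euclidNorm v ≤ 0) :
    sigmaL (blk 0 0 v a) ⊆ {a} ∪ {0} := by
  rw [sigmaL0]
  apply union_subset_union_right
  rintro l ⟨h1, h2⟩
  rw [abs_le] at h2
  have : l = 0 := by linarith [h2.2]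
  exact this

lemma S_subset_single (v : Fin 2 → ℝ) (a : ℝ) (h : a + euclidNorm v < 0) :
    sigmaL (blk 0 0 v a) ⊆ {a} := by
  rw [sigmaL0]
  rintro l (hl | ⟨h1, h2⟩)
  · exact hl
  · rw [abs_le] at h2
    linarith [h2.2]

lemma S_subset_v0 (a : ℝ) :
    sigmaL (blk 0 0 0 a) ⊆ {a} ∪ {a / 2} := by
  rw [sigmaL0]
  apply union_subset_union_right
  rintro l ⟨h1, h2⟩
  rw [euclidNorm_eq_zero.mpr rfl, abs_le] at h2
  have : l = a / 2 := by linarith [h2.1, h2.2]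
  exact this

lemma S_infinite (v : Fin 2 → ℝ) (a : ℝ) (hv : v ≠ 0) (h : 0 < a + euclidNorm v) :
    (sigmaL (blk 0 0 v a)).Infinite := by
  have hn := euclidNorm_pos_of_ne hv
  have hsub : Icc (max 0 ((a - euclidNorm v) / 2)) ((a + euclidNorm v) / 2) ⊆ sigmaL (blk 0 0 v a) := by
    rw [sigmaL0]
    intro l hl
    rw [mem_Icc, max_le_iff] at hl
    refine mem_union_right _ ⟨hl.1.1, ?_⟩
    rw [abs_le]
    constructor <;> linarith [hl.1.2, hl.2]
  exact (Set.Icc_infinite (by apply max_lt <;> linarith)).mono hsub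

/-- a matrix with the special entry pattern is a `blk (c•1) 0 w b` -/
lemma eq_blkc (B : Matrix (Fin 3) (Fin 3) ℝ) (h01 : B 0 1 = 0) (h10 : B 1 0 = 0)
    (h02 : B 0 2 = 0) (h12 : B 1 2 = 0) (heq : B 0 0 = B 1 1) :
    B = blk ((B 0 0) • 1) 0 ![B 2 0, B 2 1] (B 2 2) := by
  ext i j
  fin_cases i <;> fin_cases j <;>
    simp [blk00, blk01, blk02, blk10, blk11, blk12, blk20, blk21, blk22,
      Matrix.smul_apply, Matrix.one_apply, h01, h10, h02, h12, heq]

lemma neg_blk0 (v : Fin 2 → ℝ) (a : ℝ) : -(blk 0 0 v a) = blk 0 0 (-v) (-a) := by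
  rw [neg_blk]; norm_num

lemma neg_blkc (c : ℝ) (w : Fin 2 → ℝ) (b : ℝ) :
    -(blk (c • 1) 0 w b) = blk ((-c) • 1) 0 (-w) (-b) := by
  rw [neg_blk]; rw [neg_smul]; norm_num

def Dset : Set (Matrix (Fin 3) (Fin 3) ℝ) :=
  {P | ∃ (v : Fin 2 → ℝ) (a : ℝ), 0 ≤ a + euclidNorm v ∧ P = blk 0 0 v a}

lemma C1_subset_D : C1 ⊆ Dset := by
  rintro A ⟨v, a, hv, ha, rfl⟩
  exact ⟨v, a, le_of_lt ha, rfl⟩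

lemma blk_row0 (v : Fin 2 → ℝ) (a : ℝ) (j : Fin 3) : blk 0 0 v a 0 j = 0 := by
  fin_cases j <;> simp [blk00, blk01, blk02]

lemma blk_row1 (v : Fin 2 → ℝ) (a : ℝ) (j : Fin 3) : blk 0 0 v a 1 j = 0 := by
  fin_cases j <;> simp [blk10, blk11, blk12]

lemma Dlim (M N : Matrix (Fin 3) (Fin 3) ℝ)
    (h : ∀ t : ℝ, 0 < t → M + t • N ∈ Dset) : M ∈ Dset := by
  obtain ⟨v1, a1, _, he1⟩ := h 1 one_pos
  obtain ⟨v2, a2, _, he2⟩ := h 2 two_pos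
  have hM0 : ∀ j, M 0 j = 0 := by
    intro j
    have e1 := congrFun (congrFun he1 0) j
    have e2 := congrFun (congrFun he2 0) j
    rw [blk_row0] at e1 e2
    simp only [Matrix.add_apply, Matrix.smul_apply, smul_eq_mul] at e1 e2
    linarith
  have hM1 : ∀ j, M 1 j = 0 := by
    intro j
    have e1 := congrFun (congrFun he1 1) j
    have e2 := congrFun (congrFun he2 1) j
    rw [blk_row1] at e1 e2
    simp only [Matrix.add_apply, Matrix.smul_apply, smul_eq_mul] at e1 e2
    linarith
  have hN0 : ∀ j, N 0 j = 0 := by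
    intro j
    have e1 := congrFun (congrFun he1 0) j
    rw [blk_row0] at e1
    simp only [Matrix.add_apply, Matrix.smul_apply, smul_eq_mul] at e1
    have := hM0 j
    linarith
  have hN1 : ∀ j, N 1 j = 0 := by
    intro j
    have e1 := congrFun (congrFun he1 1) j
    rw [blk_row1] at e1
    simp only [Matrix.add_apply, Matrix.smul_apply, smul_eq_mul] at e1
    have := hM1 j
    linarith
  have hMeq := eq_blk_of_rows M hM0 hM1
  have hNeq := eq_blk_of_rows N hN0 hN1
  set vM : Fin 2 → ℝ := fun j => M 2 j.castSucc with hvM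
  set vN : Fin 2 → ℝ := fun j => N 2 j.castSucc with hvN
  refine ⟨vM, M 2 2, ?_, hMeq⟩
  by_contra hneg
  push_neg at hneg
  set ε := -(M 2 2 + euclidNorm vM) with hε
  have hεpos : 0 < ε := by rw [hε]; linarith
  set K := |N 2 2| + euclidNorm vN + 1 with hK
  have hKpos : 0 < K := by
    rw [hK]; have := abs_nonneg (N 2 2); have := euclidNorm_nonneg vN; linarith
  set t := ε / (2 * K) with ht
  have htpos : 0 < t := by positivity
  obtain ⟨v', a', hineq, heq'⟩ := h t htpos
  rw [hMeq, hNeq, blk_add_smul] at heq'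
  obtain ⟨hveq, haeq⟩ := blk_injv heq'.symm
  rw [hveq, haeq] at hineq
  have htri : euclidNorm (vM + t • vN) ≤ euclidNorm vM + t * euclidNorm vN := by
    calc euclidNorm (vM + t • vN) ≤ euclidNorm vM + euclidNorm (t • vN) := euclidNorm_triangle _ _
      _ = euclidNorm vM + t * euclidNorm vN := by rw [euclidNorm_smul _ _ (le_of_lt htpos)]
  have h1 : 0 ≤ M 2 2 + t * N 2 2 + (euclidNorm vM + t * euclidNorm vN) := by linarith
  have h2 : N 2 2 + euclidNorm vN ≤ K := by
    rw [hK]; have := le_abs_self (N 2 2); linarith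
  have h3 : t * (N 2 2 + euclidNorm vN) ≤ t * K := by
    apply mul_le_mul_of_nonneg_left h2 (le_of_lt htpos)
  have h4 : t * K = ε / 2 := by
    rw [ht]; field_simp
  have : 0 ≤ -ε + ε / 2 := by nlinarith [h1, h3, h4]
  linarith

end Assemble

theorem invariant_subsets_of_S1
    (φ : Matrix (Fin 3) (Fin 3) ℝ →ₗ[ℝ] Matrix (Fin 3) (Fin 3) ℝ)
    (hφ : ∀ A, sigmaL (φ A) = sigmaL A) :
    (∀ A ∈ C1, φ A ∈ C1) ∧
    (∀ A ∈ C2 ∪ C4, φ A ∈ C2 ∪ C4) ∧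
    (∀ A ∈ C3 ∪ C5, φ A ∈ C3 ∪ C5) := by
  -- Part 1 : C1 is invariant
  have part1 : ∀ A ∈ C1, φ A ∈ C1 := by
    rintro A ⟨v, a, hv, ha, rfl⟩
    have hnpos : 0 < euclidNorm v := euclidNorm_pos_of_ne hv
    have hσ := hφ (blk 0 0 v a)
    have hinf : (sigmaL (φ (blk 0 0 v a))).Infinite := by
      rw [hσ]; exact S_infinite v a hv ha
    obtain ⟨h01, h10, h02, h12, h0011⟩ := structure_of_infinite _ hinf
    have hφAeq := eq_blkc _ h01 h10 h02 h12 h0011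
    set c := φ (blk 0 0 v a) 0 0 with hc
    set w : Fin 2 → ℝ := ![φ (blk 0 0 v a) 2 0, φ (blk 0 0 v a) 2 1] with hw
    set b := φ (blk 0 0 v a) 2 2 with hb
    -- first spectra equation
    have E1 : ({b} : Set ℝ) ∪ {l | c ≤ l ∧ |2 * l - b - c| ≤ euclidNorm w}
        = {a} ∪ {l | 0 ≤ l ∧ |2 * l - a - 0| ≤ euclidNorm v} := by
      rw [← sigmaL_blk c b w, ← hφAeq, hσ, sigmaL0]
    -- second spectra equation
    have E2 : ({-b} : Set ℝ) ∪ {l | -c ≤ l ∧ |2 * l - -b - -c| ≤ euclidNorm w}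
        = {-a} ∪ {l | 0 ≤ l ∧ |2 * l - -a - 0| ≤ euclidNorm v} := by
      have hs2 := hφ (blk 0 0 (-v) (-a))
      have hL : φ (blk 0 0 (-v) (-a)) = blk ((-c) • 1) 0 (-w) (-b) := by
        rw [← neg_blk0, map_neg, hφAeq, neg_blkc]
      rw [hL, sigmaL_blk, sigmaL0, euclidNorm_neg, euclidNorm_neg] at hs2
      exact hs2
    rw [T_eq_Icc, T_eq_Icc] at E1
    rw [T_eq_Icc, T_eq_Icc] at E2
    rw [show a + 0 - euclidNorm v = a - euclidNorm v from by ring,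
      show a + 0 + euclidNorm v = a + euclidNorm v from by ring] at E1
    rw [show -b + -c - euclidNorm w = -b - c - euclidNorm w from by ring,
      show -b + -c + euclidNorm w = -b - c + euclidNorm w from by ring,
      show -a + 0 - euclidNorm v = -a - euclidNorm v from by ring,
      show -a + 0 + euclidNorm v = -a + euclidNorm v from by ring] at E2
    -- derive m > 0
    have hL0R0 : max 0 ((a - euclidNorm v) / 2) < (a + euclidNorm v) / 2 := by
      apply max_lt <;> linarith
    obtain ⟨hLeq, hReq⟩ := interval_match hL0R0 E1
    have hmpos : 0 < euclidNorm w := by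
      have h1 : (b + c - euclidNorm w) / 2 ≤ max c ((b + c - euclidNorm w) / 2) := le_max_right _ _
      rw [hLeq] at h1
      nlinarith [hL0R0, hReq, h1]
    have hc0 : c = 0 := matching hnpos ha hmpos E1 E2
    refine ⟨w, b, ?_, ?_, ?_⟩
    · intro hw0
      rw [hw0] at hmpos
      rw [euclidNorm_eq_zero.mpr rfl] at hmpos
      exact lt_irrefl _ hmpos
    · -- 0 < b + euclidNorm w
      have : b + c + euclidNorm w = a + euclidNorm v := by linarith [hReq]
      rw [hc0] at this
      linarith
    · rw [hφAeq, hc0, blk_c0]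
  -- Part 2 : C2 ∪ C4
  have part24 : ∀ A ∈ C2 ∪ C4, φ A ∈ C2 ∪ C4 := by
    rintro A (⟨v, a, hv, ha, rfl⟩ | ⟨a, ha, rfl⟩)
    · -- A ∈ C2
      have hnpos : 0 < euclidNorm v := euclidNorm_pos_of_ne hv
      have haneg : a < 0 := by linarith
      -- φ A ∈ Dset
      have hD : φ (blk 0 0 v a) ∈ Dset := by
        apply Dlim _ (φ (blk 0 0 0 1))
        intro t ht
        have hC1 : blk 0 0 v a + t • blk 0 0 0 1 ∈ C1 := by
          rw [blk_add_smul]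
          refine ⟨v + t • 0, a + t * 1, ?_, ?_, rfl⟩
          · simpa using hv
          · simp only [smul_zero, add_zero, mul_one]
            linarith
        have := part1 _ hC1
        rw [← φ.map_smul, ← φ.map_add]
        exact C1_subset_D this
      obtain ⟨v', a', hD2, hφeq⟩ := hD
      have hσ : sigmaL (blk 0 0 v' a') = sigmaL (blk 0 0 v a) := by
        rw [← hφeq, hφ]
      by_cases hv' : v' = 0
      · exfalso
        -- a ∈ spectrum of φA which is ⊆ {a'} ∪ nonneg with a' ≥ 0
        have hmem : a ∈ sigmaL (blk 0 0 v' a') := by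
          rw [hσ]; exact mem_S_self v a
        have := S_subset_nonneg v' a' hmem
        rw [hv'] at hD2
        rw [euclidNorm_eq_zero.mpr rfl] at hD2
        rcases this with h' | h'
        · rw [mem_singleton_iff] at h'
          rw [h'] at haneg; linarith
        · exact absurd h' (by simpa using haneg.not_ge)
      · rcases lt_or_eq_of_le hD2 with hpos | hzero
        · exfalso
          have hinf : (sigmaL (blk 0 0 v' a')).Infinite := S_infinite v' a' hv' hpos
          rw [hσ] at hinf
          have hfin : (sigmaL (blk 0 0 v a)).Finite :=
            Set.Finite.subset (by exact (finite_singleton a).union (finite_singleton 0))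
              (S_subset_pair v a (le_of_eq ha))
          exact hinf hfin
        · left
          exact ⟨v', a', hv', hzero.symm, hφeq⟩
    · -- A ∈ C4
      have hD : φ (blk 0 0 0 a) ∈ Dset := by
        apply Dlim _ (φ (blk 0 0 ![1, 0] 0))
        intro t ht
        have hC1 : blk 0 0 0 a + t • blk 0 0 ![1, 0] 0 ∈ C1 := by
          rw [blk_add_smul]
          refine ⟨0 + t • ![1, 0], a + t * 0, ?_, ?_, rfl⟩
          · intro hcon
            have := congrFun hcon 0
            simp at this
            linarith
          · have he : euclidNorm (0 + t • ![1, 0]) = t := by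
              rw [zero_add, euclidNorm_smul _ _ (le_of_lt ht)]
              rw [euclidNorm_eq_sqrt]
              norm_num
            rw [he]
            linarith
        have := part1 _ hC1
        rw [← φ.map_smul, ← φ.map_add]
        exact C1_subset_D this
      obtain ⟨v', a', hD2, hφeq⟩ := hD
      have hσ : sigmaL (blk 0 0 v' a') = sigmaL (blk 0 0 0 a) := by
        rw [← hφeq, hφ]
      by_cases hv' : v' = 0
      · right
        subst hv'
        rw [euclidNorm_eq_zero.mpr rfl, add_zero] at hD2
        refine ⟨a', ?_, hφeq⟩
        rcases lt_or_eq_of_le hD2 with h' | h'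
        · exact h'
        · exfalso
          have hmem : a ∈ sigmaL (blk 0 0 (0 : Fin 2 → ℝ) a') := by
            rw [hσ]; exact mem_S_self 0 a
          have := S_subset_v0 a' hmem
          rw [← h'] at this
          simp at this
          rcases this with h'' | h'' <;> linarith
      · rcases lt_or_eq_of_le hD2 with hpos | hzero
        · exfalso
          have hinf : (sigmaL (blk 0 0 v' a')).Infinite := S_infinite v' a' hv' hpos
          rw [hσ] at hinf
          have hfin : (sigmaL (blk 0 0 (0 : Fin 2 → ℝ) a)).Finite :=
            Set.Finite.subset ((finite_singleton a).union (finite_singleton (a / 2)))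
              (S_subset_v0 a)
          exact hinf hfin
        · left
          exact ⟨v', a', hv', hzero.symm, hφeq⟩
  refine ⟨part1, part24, ?_⟩
  -- Part 3 : C3 ∪ C5
  rintro A (⟨v, a, hv, ha, rfl⟩ | ⟨a, ha, rfl⟩)
  · -- A ∈ C3
    have hnpos : 0 < euclidNorm v := euclidNorm_pos_of_ne hv
    have hC1 : -(blk 0 0 v a) ∈ C1 := by
      rw [neg_blk0]
      refine ⟨-v, -a, by simpa using hv, ?_, rfl⟩
      rw [euclidNorm_neg]
      linarith
    obtain ⟨w, bb, hwne, hwb, hne⟩ := part1 _ hC1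
    rw [map_neg] at hne
    have hφeq : φ (blk 0 0 v a) = blk 0 0 (-w) (-bb) := by
      rw [← neg_blk0, ← hne, neg_neg]
    have hσ : sigmaL (blk 0 0 (-w) (-bb)) = sigmaL (blk 0 0 v a) := by
      rw [← hφeq, hφ]
    left
    refine ⟨-w, -bb, by simpa using hwne, ?_, hφeq⟩
    rw [euclidNorm_neg]
    by_contra hge
    push_neg at hge
    have hmem : (-bb + euclidNorm w) / 2 ∈ sigmaL (blk 0 0 (-w) (-bb)) := by
      have := mem_S_half (-w) (-bb) (by rwa [euclidNorm_neg])
      rwa [euclidNorm_neg] at this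
    rw [hσ] at hmem
    have := S_subset_single v a ha hmem
    rw [mem_singleton_iff] at this
    have hwnn : 0 ≤ euclidNorm w := euclidNorm_nonneg w
    nlinarith [this]
  · -- A ∈ C5
    rcases lt_or_eq_of_le ha with haneg | hzero
    · -- a < 0 : -A ∈ C4
      have hC4 : -(blk 0 0 0 a) ∈ C2 ∪ C4 := by
        right
        rw [neg_blk0]
        refine ⟨-a, by linarith, by norm_num⟩
      have h24 := part24 _ hC4
      rw [map_neg] at h24
      rcases h24 with ⟨w, bb, hwne, hwb, hne⟩ | ⟨bb, hbb, hne⟩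
      · -- C2 branch : contradiction
        exfalso
        have hφeq : φ (blk 0 0 0 a) = blk 0 0 (-w) (-bb) := by
          rw [← neg_blk0, ← hne, neg_neg]
        have hσ : sigmaL (blk 0 0 (-w) (-bb)) = sigmaL (blk 0 0 (0 : Fin 2 → ℝ) a) := by
          rw [← hφeq, hφ]
        have hwpos : 0 < euclidNorm w := euclidNorm_pos_of_ne hwne
        have hinf : (sigmaL (blk 0 0 (-w) (-bb))).Infinite := by
          apply S_infinite _ _ (by simpa using hwne)
          rw [euclidNorm_neg]
          linarith
        rw [hσ] at hinf
        exact hinf (Set.Finite.subset ((finite_singleton a).union (finite_singleton (a / 2)))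
          (S_subset_v0 a))
      · -- C4 branch : φ A = blk 0 0 0 (-bb) ∈ C5
        right
        refine ⟨-bb, by linarith, ?_⟩
        have : φ (blk 0 0 0 a) = -(blk 0 0 0 bb) := by rw [← hne, neg_neg]
        rw [this, neg_blk0]
        norm_num
    · -- a = 0 : A = 0
      right
      refine ⟨0, le_refl 0, ?_⟩
      rw [← hzero, hzero, blk_zero, map_zero]
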